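/- Let U : CommRingCat ⥤ Type be the forgetful functor on the category of commutative rings and for each natural number n let U^n : CommRingCat ⥤ Type be the functor sending a commutative ring R to the type Fin n → U(R) and a ring homomorphism f to postcomposition with U(f). The map sending a polynomial p : MvPolynomial (Fin n) ℤ to the natural transformation U^n ⟶ U whose component at R sends x : Fin n → R to the evaluation of p at x (via the unique ℤ-algebra structure on R, i.e. MvPolynomial.aeval x p) is a bijection between MvPolynomial (Fin n) ℤ and the natural transformations U^n ⟶ U. -/

import Mathlib

/-!
`Uⁿ` is represented by the free commutative ring `ℤ[X₀, …, Xₙ₋₁]` (lifted to the universe at hand),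
with universal element the tuple of variables. By Yoneda, a natural transformation `τ : Uⁿ ⟶ U` is
therefore determined by the single polynomial `p = τ(X)`, and naturality along the evaluation map
`ℤ[X] → R, Xᵢ ↦ xᵢ` gives `τ(x) = p(x)`.
-/

open CategoryTheory

/-- The `n`-th power of the forgetful functor on the category of commutative rings,
sending a ring `R` to `Fin n → R` and a homomorphism to postcomposition with it. -/
def forgetPow (n : ℕ) : CommRingCat.{u} ⥤ Type u where
  obj R := Fin n → R
  map f := TypeCat.ofHom fun x => fun i => f (x i)

namespace MvPolynomial

theorem aeval_uliftUp_X_down {σ : Type*} (p : MvPolynomial σ ℤ) :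
    (aeval (fun i => ULift.up.{u} (X (R := ℤ) i)) p).down = p := by
  induction p using MvPolynomial.induction_on with
  | C a => simp
  | add p q hp hq => simp [hp, hq]
  | mul_X p i hp => simp [hp]

end MvPolynomial

open MvPolynomial

noncomputable section

namespace CommRingCat

abbrev liftedMvPolynomial (n : ℕ) : CommRingCat.{u} :=
  of (ULift.{u} (MvPolynomial (Fin n) ℤ))

def genericPoint (n : ℕ) : (forgetPow.{u} n).obj (liftedMvPolynomial n) :=
  fun i => ULift.up (X i)

def evalAt {n : ℕ} {R : CommRingCat.{u}} (x : Fin n → R) : liftedMvPolynomial n ⟶ R :=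
  ofHom ((aeval x).toRingHom.comp ULift.ringEquiv.toRingHom)

theorem forgetPow_map_evalAt_genericPoint {n : ℕ} {R : CommRingCat.{u}} (x : Fin n → R) :
    (forgetPow n).map (evalAt x) (genericPoint n) = x :=
  funext fun i => aeval_X x i

def polynomialOperation (n : ℕ) (p : MvPolynomial (Fin n) ℤ) :
    forgetPow.{u} n ⟶ forget CommRingCat.{u} where
  app R := TypeCat.ofHom fun x => aeval x p
  naturality := by
    intro R S g
    ext x
    exact (comp_aeval_apply (f := x) g.hom.toIntAlgHom p).symm

theorem polynomialOperation_app_genericPoint (n : ℕ) (p : MvPolynomial (Fin n) ℤ) :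
    ((polynomialOperation.{u} n p).app _ (genericPoint n)).down = p :=
  aeval_uliftUp_X_down p

theorem natTrans_app_eq_aeval {n : ℕ} (τ : forgetPow.{u} n ⟶ forget CommRingCat.{u})
    {R : CommRingCat.{u}} (x : Fin n → R) :
    τ.app R x = aeval x (τ.app _ (genericPoint n)).down := by
  have naturality : τ.app R ((forgetPow n).map (evalAt x) (genericPoint n)) =
      evalAt x (τ.app _ (genericPoint n)) :=
    types_congr_hom (τ.naturality (evalAt x)) (genericPoint n)
  rwa [forgetPow_map_evalAt_genericPoint] at naturality

end CommRingCat

end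

/-- Reconstruction of the `n`-ary operations `T_U(n, 1) = Nat(Uⁿ, U)` of the Lawvere theory of
commutative rings from the forgetful functor `U` on the category of commutative rings:
natural transformations `Uⁿ ⟶ U` correspond exactly to integer polynomials in `n` variables,
via evaluation. -/
theorem commRingOperations_bijective (n : ℕ) :
    Function.Bijective (fun p : MvPolynomial (Fin n) ℤ =>
      ({ app := fun R => TypeCat.ofHom fun x => MvPolynomial.aeval x p
         naturality := by
           intro R S g
           ext x
           exact (MvPolynomial.comp_aeval_apply (f := x) g.hom.toIntAlgHom p).symm } :
        forgetPow.{u} n ⟶ forget CommRingCat.{u})) := by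
  show Function.Bijective (CommRingCat.polynomialOperation n)
  refine Function.bijective_iff_has_inverse.mpr
    ⟨fun τ => (τ.app _ (CommRingCat.genericPoint n)).down,
      CommRingCat.polynomialOperation_app_genericPoint n, fun τ => ?_⟩
  ext R x
  exact (CommRingCat.natTrans_app_eq_aeval τ x).symm
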